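/- arXiv:2003.05419 — 5 statements merged into one kernel-verified Lean document; each statement's English description precedes it below -/
import Mathlib

section
/- For every n ≥ 5, the anticycle of length n (the complement of the cycle C_n) is cricket-free. -/
open SimpleGraph

/-- The cycle of length `n` on the vertex set `ZMod n`: `i` is adjacent to `i + 1`. -/
def cycleG (n : ℕ) : SimpleGraph (ZMod n) :=
  SimpleGraph.fromRel (fun i j => j = i + 1)

/-- The anticycle of length `n` is the complement of the cycle of length `n`. -/
def anticycle (n : ℕ) : SimpleGraph (ZMod n) := (cycleG n)ᶜ

/-- The cricket graph: vertex `0` adjacent to `1, 2, 3, 4`, plus the edge `{3, 4}`. -/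
def cricketGraph : SimpleGraph (Fin 5) :=
  SimpleGraph.fromRel (fun a b => (a = 0 ∧ b ≠ 0) ∨ (a = 3 ∧ b = 4))

/-- `G` is `H`-free if no induced subgraph of `G` is isomorphic to `H`. -/
def HFree {V W : Type*} (G : SimpleGraph V) (H : SimpleGraph W) : Prop :=
  ¬ ∃ A : Set V, Nonempty ((G.induce A) ≃g H)

theorem anticycle_cricketFree (n : ℕ) (hn : 5 ≤ n) :
    HFree (anticycle n) cricketGraph := by
  rintro ⟨A, ⟨e⟩⟩
  set f : Fin 5 → ZMod n := fun i => ((e.symm i : A) : ZMod n) with hf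
  have hinj : Function.Injective f := fun i j h => e.symm.injective (Subtype.ext h)
  have key : ∀ i : Fin 5, (1 : Fin 5) ≠ i → ¬ cricketGraph.Adj 1 i →
      f i = f 1 + 1 ∨ f i = f 1 - 1 := by
    intro i hne hi
    have hfne : f 1 ≠ f i := fun h => hne (hinj h)
    have hnadj : ¬ (anticycle n).Adj (f 1) (f i) := by
      intro h
      exact hi (e.symm.map_adj_iff.mp h)
    have hcyc : (cycleG n).Adj (f 1) (f i) := by
      by_contra hc
      exact hnadj ⟨hfne, hc⟩
    rcases hcyc with ⟨-, h | h⟩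
    · exact Or.inl h
    · exact Or.inr (by rw [h]; ring)
  have h2 := key 2 (by decide) (by simp [cricketGraph])
  have h3 := key 3 (by decide) (by simp [cricketGraph])
  have h4 := key 4 (by decide) (by simp [cricketGraph])
  rcases h2 with h2 | h2 <;> rcases h3 with h3 | h3 <;> rcases h4 with h4 | h4 <;>
    first
    | exact absurd (hinj (h2.trans h3.symm)) (by decide)
    | exact absurd (hinj (h2.trans h4.symm)) (by decide)
    | exact absurd (hinj (h3.trans h4.symm)) (by decide)
end

section
/- Let G be a finite simple graph, U ⊆ V(G) a vertex cover of G, I = I(G) the edge ideal of G in the polynomial ring R = K[x_1,...,x_n], and let U also denote the ideal generated by the variables in U. Then for every k ≥ 0 and every minimal monomial generator L of I^k (a product of k edge monomials), the colon ideal (U·I^k : L) is generated by variables. -/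
open MvPolynomial

/-- The edge ideal of a graph `G` in `K[x_v : v ∈ V]`. -/
noncomputable def edgeIdeal {V K : Type*} [Field K] (G : SimpleGraph V) : Ideal (MvPolynomial V K) :=
  Ideal.span {p | ∃ i j : V, G.Adj i j ∧ p = X i * X j}

/-- The ideal generated by the variables indexed by a set `U` of vertices. -/
noncomputable def varIdeal {V K : Type*} [Field K] (U : Set V) : Ideal (MvPolynomial V K) :=
  Ideal.span {p | ∃ v ∈ U, p = X v}

/-!
Write `L = x^e`. Since `U·I(G)^k` is a monomial ideal, so is its colon by `L`, and it suffices
to show: if `x^m·x^e` is divisible by a generator `x_w·x^f` of `U·I(G)^k`, then some variable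
`x_v` dividing `x^m` satisfies `x_v·x^e ∈ U·I(G)^k`. Such a `v` is found by an alternating walk
from `w`: if `x_w` does not divide `x^m`, it is used by an edge `wz` of `e`; then `x_z` is used
by an edge `zw'` of `f` and the argument continues from `w'` with one edge less on each side,
unless `z` is not needed by `f`, in which case it restarts from the `U`-endpoint of any edge of
`f`. When the walk reaches a vertex `v` of `m`, the edges of `e` and `f` along it can be
swapped to exhibit `x_v·x^e` as a multiple of `x_w·x^{f'}` or of `x_u·x^{f'}` with `u ∈ U`.
-/

open Pointwise

section Exponents

variable {V : Type*} {G : SimpleGraph V}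

noncomputable def dartExp (p : G.Dart) : V →₀ ℕ := Finsupp.single p.fst 1 + Finsupp.single p.snd 1

lemma dartExp_symm (p : G.Dart) : dartExp p.symm = dartExp p := add_comm _ _

lemma eq_fst_or_eq_snd_of_dartExp_ne_zero {p : G.Dart} {x : V} (h : dartExp p x ≠ 0) :
    x = p.fst ∨ x = p.snd := by
  by_contra! hx
  simp [dartExp, hx.1.symm, hx.2.symm] at h

variable (G) in
/-- The exponent vectors of the products of `n` edge monomials, i.e. of the generators of
`I(G)^n`. -/
def edgeExps (n : ℕ) : Set (V →₀ ℕ) := Set.range fun D : Fin n → G.Dart => ∑ t, dartExp (D t)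

lemma edgeExps_zero : edgeExps G 0 = {0} := by
  ext e
  simp [edgeExps]

lemma edgeExps_succ (n : ℕ) :
    edgeExps G (n + 1) = Set.range (dartExp (G := G)) + edgeExps G n := by
  ext e
  simp only [edgeExps, Set.mem_add, Set.mem_range, exists_exists_eq_and]
  constructor
  · rintro ⟨D, rfl⟩
    exact ⟨D 0, Fin.tail D, (Fin.sum_univ_succ fun t => dartExp (D t)).symm⟩
  · rintro ⟨p, D, rfl⟩
    exact ⟨Fin.cons p D, by simp [Fin.sum_univ_succ]⟩

lemma exists_dart_fst_eq {n : ℕ} {e : V →₀ ℕ} (he : e ∈ edgeExps G (n + 1)) {x : V}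
    (hx : e x ≠ 0) : ∃ p : G.Dart, p.fst = x ∧ ∃ e' ∈ edgeExps G n, e = dartExp p + e' := by
  obtain ⟨D, rfl⟩ := he
  rw [Finsupp.finsetSum_apply] at hx
  obtain ⟨t, -, ht⟩ := Finset.exists_ne_zero_of_sum_ne_zero hx
  have hsplit := Fin.sum_univ_succAbove (fun i => dartExp (D i)) t
  rcases eq_fst_or_eq_snd_of_dartExp_ne_zero ht with h | h
  · exact ⟨D t, h.symm, _, ⟨_, rfl⟩, hsplit⟩
  · exact ⟨(D t).symm, h.symm, _, ⟨_, rfl⟩, by rw [dartExp_symm]; exact hsplit⟩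

lemma exists_dart_fst_mem {U : Set V} (hU : ∀ i j : V, G.Adj i j → i ∈ U ∨ j ∈ U) {n : ℕ}
    {e : V →₀ ℕ} (he : e ∈ edgeExps G (n + 1)) :
    ∃ p : G.Dart, p.fst ∈ U ∧ ∃ e' ∈ edgeExps G n, e = dartExp p + e' := by
  rw [edgeExps_succ] at he
  obtain ⟨_, ⟨p, rfl⟩, e', he', rfl⟩ := he
  rcases hU _ _ p.adj with h | h
  · exact ⟨p, h, e', he', rfl⟩
  · exact ⟨p.symm, h, e', he', by rw [dartExp_symm]⟩

variable (G) in
/-- The exponent vectors of the monomials in `W·I(G)^n`. -/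
def varEdgeExps (W : Set V) (n : ℕ) : Set (V →₀ ℕ) :=
  {d | ∃ t ∈ W, ∃ e ∈ edgeExps G n, Finsupp.single t 1 + e ≤ d}

end Exponents

section Exchange

variable {V : Type*} {G : SimpleGraph V} {U : Set V}

lemma le_of_le_add_single {f g : V →₀ ℕ} {z : V} (h : f ≤ g + Finsupp.single z 1)
    (hz : f z = 0) : f ≤ g := by
  intro x
  have hx := h x
  by_cases hxz : x = z
  · subst hxz
    simp [hz]
  · simpa [Finsupp.single_apply, Ne.symm hxz] using hx

lemma varEdgeExps_mono {W W' : Set V} (hW : W ⊆ W') (n : ℕ) :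
    varEdgeExps G W n ⊆ varEdgeExps G W' n := by
  rintro d ⟨t, ht, e, he, hle⟩
  exact ⟨t, hW ht, e, he, hle⟩

lemma varEdgeExps_insert (w : V) (W : Set V) (n : ℕ) :
    varEdgeExps G (insert w W) n = varEdgeExps G {w} n ∪ varEdgeExps G W n := by
  ext d
  simp [varEdgeExps, or_and_right, exists_or]

lemma dartExp_add_mem_varEdgeExps (p : G.Dart) {W : Set V} {n : ℕ} {d : V →₀ ℕ}
    (hd : d ∈ varEdgeExps G W n) : dartExp p + d ∈ varEdgeExps G W (n + 1) := by
  obtain ⟨t, ht, e, he, hle⟩ := hd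
  refine ⟨t, ht, dartExp p + e, ?_, ?_⟩
  · rw [edgeExps_succ]
    exact Set.add_mem_add ⟨p, rfl⟩ he
  · rw [add_left_comm]
    gcongr

lemma dartExp_add_mem_varEdgeExps_fst {p : G.Dart} {w : V} (hw : G.Adj p.snd w) {n : ℕ}
    {d : V →₀ ℕ} (hd : d ∈ varEdgeExps G {w} n) :
    dartExp p + d ∈ varEdgeExps G {p.fst} (n + 1) := by
  obtain ⟨t, ht, g, hg, hle⟩ := hd
  rw [Set.mem_singleton_iff] at ht
  subst ht
  let q : G.Dart := ⟨(p.snd, t), hw⟩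
  refine ⟨p.fst, rfl, dartExp q + g, ?_, ?_⟩
  · rw [edgeExps_succ]
    exact Set.add_mem_add ⟨q, rfl⟩ hg
  · calc Finsupp.single p.fst 1 + (dartExp q + g)
        = dartExp p + (Finsupp.single t 1 + g) := by
          simp only [dartExp, q]
          abel
      _ ≤ dartExp p + d := by gcongr

/-- Either `x_z` is not needed, and an edge of `f` is dropped keeping its endpoint in `U`, or
an edge `zw` of `f` is dropped keeping `w`. -/
lemma exists_single_add_le_of_le_add_single
    (hU : ∀ i j : V, G.Adj i j → i ∈ U ∨ j ∈ U) {n : ℕ} {f g : V →₀ ℕ}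
    (hf : f ∈ edgeExps G (n + 1)) {z : V} (hle : f ≤ g + Finsupp.single z 1) :
    ∃ w, (w ∈ U ∨ G.Adj z w) ∧ ∃ f' ∈ edgeExps G n, Finsupp.single w 1 + f' ≤ g := by
  by_cases hfz : f z = 0
  · obtain ⟨q, hqU, f', hf', rfl⟩ := exists_dart_fst_mem hU hf
    refine ⟨q.fst, Or.inl hqU, f', hf', le_trans ?_ (le_of_le_add_single hle hfz)⟩
    simp only [dartExp]
    gcongr
    exact le_self_add
  · obtain ⟨q, rfl, f', hf', rfl⟩ := exists_dart_fst_eq hf hfz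
    refine ⟨q.snd, Or.inr q.adj, f', hf', ?_⟩
    refine le_of_add_le_add_right (a := Finsupp.single q.fst 1) (le_trans (le_of_eq ?_) hle)
    simp only [dartExp]
    abel

/-- After a step along an edge `zw'` of `f`, the walk restarts from an arbitrary vertex `w'`;
hence the cover `insert w U` in the induction. -/
theorem exists_single_add_mem_varEdgeExps (hU : ∀ i j : V, G.Adj i j → i ∈ U ∨ j ∈ U)
    {n : ℕ} {e : V →₀ ℕ} (he : e ∈ edgeExps G n) {w : V} {m : V →₀ ℕ}
    (h : m + e ∈ varEdgeExps G {w} n) :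
    ∃ v, m v ≠ 0 ∧ Finsupp.single v 1 + e ∈ varEdgeExps G (insert w U) n := by
  obtain ⟨w', hw', f, hf, hle⟩ := h
  rw [Set.mem_singleton_iff] at hw'
  subst w'
  induction n generalizing e w f with
  | zero =>
    refine ⟨w, ?_, w, Set.mem_insert _ _, e, he, le_rfl⟩
    rw [edgeExps_zero, Set.mem_singleton_iff] at he
    subst he
    have := hle w
    simp only [Finsupp.add_apply, Finsupp.single_eq_same, Finsupp.coe_zero, Pi.zero_apply] at this
    omega
  | succ n ih =>
    by_cases hmw : m w ≠ 0
    · exact ⟨w, hmw, w, Set.mem_insert _ _, e, he, le_rfl⟩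
    have hew : e w ≠ 0 := by
      have := hle w
      simp only [Finsupp.add_apply, Finsupp.single_eq_same] at this
      omega
    obtain ⟨p, rfl, e', he', rfl⟩ := exists_dart_fst_eq he hew
    replace hle : f ≤ m + e' + Finsupp.single p.snd 1 :=
      le_of_add_le_add_left (a := Finsupp.single p.fst 1) <| hle.trans_eq <| by
        simp only [dartExp]
        abel
    obtain ⟨w', hw', f', hf', hle'⟩ := exists_single_add_le_of_le_add_single hU hf hle
    obtain ⟨v, hv, hmem⟩ := ih he' f' hf' hle'
    refine ⟨v, hv, ?_⟩
    rw [varEdgeExps_insert] at hmem ⊢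
    rw [add_left_comm]
    rcases hmem with hwalk | hcover
    · rcases hw' with hw'U | hadj
      · exact Or.inr (dartExp_add_mem_varEdgeExps p
          (varEdgeExps_mono (Set.singleton_subset_iff.2 hw'U) _ hwalk))
      · exact Or.inl (dartExp_add_mem_varEdgeExps_fst hadj hwalk)
    · exact Or.inr (dartExp_add_mem_varEdgeExps p hcover)

theorem exists_single_add_mem_varEdgeExps_of_add_mem
    (hU : ∀ i j : V, G.Adj i j → i ∈ U ∨ j ∈ U) {n : ℕ} {e : V →₀ ℕ}
    (he : e ∈ edgeExps G n) {m : V →₀ ℕ} (h : m + e ∈ varEdgeExps G U n) :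
    ∃ v, m v ≠ 0 ∧ Finsupp.single v 1 + e ∈ varEdgeExps G U n := by
  obtain ⟨w, hw, f, hf, hle⟩ := h
  rw [← Set.insert_eq_of_mem hw]
  exact exists_single_add_mem_varEdgeExps hU he ⟨w, rfl, f, hf, hle⟩

end Exchange

section Ideals

variable {σ R : Type*} [CommSemiring R]

lemma span_monomial_mul_span_monomial (s t : Set (σ →₀ ℕ)) :
    Ideal.span ((fun d => monomial d (1 : R)) '' s) * Ideal.span ((fun d => monomial d 1) '' t)
      = Ideal.span ((fun d => monomial d 1) '' (s + t)) := by
  rw [Ideal.span_mul_span']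
  congr 1
  ext f
  simp only [Set.mem_mul, Set.mem_image, Set.mem_add]
  constructor
  · rintro ⟨_, ⟨a, ha, rfl⟩, _, ⟨b, hb, rfl⟩, rfl⟩
    exact ⟨a + b, ⟨a, ha, b, hb, rfl⟩, by rw [monomial_mul, one_mul]⟩
  · rintro ⟨_, ⟨a, ha, b, hb, rfl⟩, rfl⟩
    exact ⟨_, ⟨a, ha, rfl⟩, _, ⟨b, hb, rfl⟩, by rw [monomial_mul, one_mul]⟩

end Ideals

section EdgeIdeal

variable {V K : Type*} [Field K] {G : SimpleGraph V}

lemma X_mul_X_eq_monomial_dartExp (p : G.Dart) :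
    (X p.fst * X p.snd : MvPolynomial V K) = monomial (dartExp p) 1 := by
  rw [X, X, monomial_mul, one_mul, dartExp]

lemma edgeIdeal_eq_span : edgeIdeal G (K := K) =
    Ideal.span ((fun d => monomial d 1) '' Set.range (dartExp (G := G))) := by
  rw [edgeIdeal, ← Set.range_comp]
  congr 1
  ext f
  simp only [Set.mem_ofPred_eq, Set.mem_range, Function.comp_apply,
    ← X_mul_X_eq_monomial_dartExp]
  constructor
  · rintro ⟨i, j, hij, rfl⟩
    exact ⟨⟨(i, j), hij⟩, rfl⟩
  · rintro ⟨p, rfl⟩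
    exact ⟨p.fst, p.snd, p.adj, rfl⟩

lemma edgeIdeal_pow_eq_span (n : ℕ) : edgeIdeal G (K := K) ^ n =
    Ideal.span ((fun d => monomial d 1) '' edgeExps G n) := by
  induction n with
  | zero => simp [edgeExps_zero, Ideal.one_eq_top]
  | succ n ih =>
    rw [pow_succ', ih, edgeIdeal_eq_span, span_monomial_mul_span_monomial, edgeExps_succ]

lemma varIdeal_eq_span_X_image (W : Set V) : varIdeal (K := K) W = Ideal.span (X '' W) := by
  rw [varIdeal]
  congr 1
  ext
  simp [eq_comm]

lemma varIdeal_mul_edgeIdeal_pow_eq_span (W : Set V) (n : ℕ) :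
    varIdeal W * edgeIdeal G (K := K) ^ n =
      Ideal.span ((fun d => monomial d 1) ''
        ((fun t => Finsupp.single t 1) '' W + edgeExps G n)) := by
  rw [varIdeal_eq_span_X_image, edgeIdeal_pow_eq_span, ← span_monomial_mul_span_monomial,
    Set.image_image]
  rfl

lemma mem_varIdeal_mul_edgeIdeal_pow_iff {W : Set V} {n : ℕ} {f : MvPolynomial V K} :
    f ∈ varIdeal W * edgeIdeal G ^ n ↔ ∀ d ∈ f.support, d ∈ varEdgeExps G W n := by
  rw [varIdeal_mul_edgeIdeal_pow_eq_span, mem_ideal_span_monomial_image]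
  simp [varEdgeExps, Set.mem_add]

lemma exists_mem_edgeExps_prod_eq_monomial {k : ℕ} {a b : Fin k → V}
    (hab : ∀ t, G.Adj (a t) (b t)) :
    ∃ e ∈ edgeExps G k, ∏ t, (X (a t) * X (b t) : MvPolynomial V K) = monomial e 1 := by
  refine ⟨_, ⟨fun t => ⟨(a t, b t), hab t⟩, rfl⟩, ?_⟩
  simp_rw [monomial_sum_one, ← X_mul_X_eq_monomial_dartExp]

end EdgeIdeal

/-- If `U` is a vertex cover of `G`, then for every `k ≥ 0` and every product `L` of `k`
edge monomials of `G`, the colon ideal `(U·I(G)^k : L)` is generated by variables. -/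
theorem colon_generated_by_variables {V K : Type*} [Field K]
    (G : SimpleGraph V) (U : Set V)
    (hU : ∀ i j : V, G.Adj i j → i ∈ U ∨ j ∈ U)
    (k : ℕ) (L : MvPolynomial V K)
    (hL : ∃ a b : Fin k → V, (∀ t, G.Adj (a t) (b t)) ∧
      L = ∏ t : Fin k, (X (a t) * X (b t))) :
    ∃ T : Set V,
      Submodule.colon (varIdeal U * (edgeIdeal G (K := K)) ^ k) (Ideal.span {L})
        = varIdeal T := by
  obtain ⟨a, b, hab, rfl⟩ := hL
  obtain ⟨e, he, hL⟩ := exists_mem_edgeExps_prod_eq_monomial (K := K) hab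
  rw [hL]
  refine ⟨{v | Finsupp.single v 1 + e ∈ varEdgeExps G U k}, le_antisymm ?_ ?_⟩
  · intro f hf
    rw [Ideal.mem_colon_span_singleton, mem_varIdeal_mul_edgeIdeal_pow_iff] at hf
    rw [varIdeal_eq_span_X_image, mem_ideal_span_X_image]
    intro d hd
    have hde : d + e ∈ (f * monomial e 1).support := by
      rwa [mem_support_iff, coeff_mul_monomial, mul_one, ← mem_support_iff]
    obtain ⟨v, hv, hmem⟩ := exists_single_add_mem_varEdgeExps_of_add_mem hU he (hf _ hde)
    exact ⟨v, hmem, hv⟩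
  · rw [varIdeal, Ideal.span_le]
    rintro _ ⟨v, hv, rfl⟩
    rw [SetLike.mem_coe, Ideal.mem_colon_span_singleton, ← pow_one (X v), ← monomial_single_add,
      mem_varIdeal_mul_edgeIdeal_pow_iff]
    intro d hd
    rwa [Finset.mem_singleton.1 (support_monomial_subset hd)]
end

section
/- Let G be a finite simple graph and S ⊆ V(G) an independent set of G, with G^S its S-suspension (new vertex x_0). Let J = (x_0 x_i : x_i ∈ V(G) \ S). Then for every k ≥ 1, the set of minimal monomial generators of I(G^S)^k is the disjoint union of the minimal monomial generators of I(G)^k and those of J·I(G^S)^{k-1}. -/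
open MvPolynomial

/-- The `S`-suspension of `G`: add a new vertex (`none`) joined to every vertex of
`V(G) \ S`. -/
def suspension {V : Type*} (G : SimpleGraph V) (S : Set V) : SimpleGraph (Option V) :=
  SimpleGraph.fromRel (fun a b =>
    match a, b with
    | some x, some y => G.Adj x y
    | some x, none => x ∉ S
    | _, _ => False)

/-- The set of (exponent vectors of) minimal monomial generators of a monomial ideal `I`:
monomials of `I` not divisible by any other monomial of `I`. -/
def minGens {V K : Type*} [Field K] (I : Ideal (MvPolynomial V K)) : Set (V →₀ ℕ) :=
  {d | monomial d (1 : K) ∈ I ∧ ∀ d' : V →₀ ℕ, d' ≤ d → d' ≠ d → monomial d' (1 : K) ∉ I}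

/-! All ideals involved are generated by monomials of one degree, so their minimal generators are
their whole generating sets of exponent vectors: the `k`-fold sumsets of sets of degree-2 vectors.
The edges of `G^S` are those of `G` together with the `x₀ xᵢ`, and a sum of `k` edge vectors of
`G^S` either uses edges of `G` only, or, after reordering, starts with some `x₀ xᵢ`. The exponent
of `x₀` (zero, resp. positive) makes the two cases disjoint. -/

open Pointwise

namespace Finsupp

variable {σ : Type*}

theorem eq_of_le_of_degree_eq {f g : σ →₀ ℕ} (hle : f ≤ g) (hdeg : f.degree = g.degree) :
    f = g := by
  obtain ⟨c, rfl⟩ := exists_add_of_le hle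
  rw [map_add, left_eq_add, degree_eq_zero_iff] at hdeg
  rw [hdeg, add_zero]

theorem isAntichain_of_degree_eq {D : Set (σ →₀ ℕ)} {N : ℕ} (hD : ∀ d ∈ D, d.degree = N) :
    IsAntichain (· ≤ ·) D :=
  fun _ ha _ hb hne hle => hne (eq_of_le_of_degree_eq hle ((hD _ ha).trans (hD _ hb).symm))

end Finsupp

section IteratedSumset

variable {M : Type*} [AddCommMonoid M]

def iteratedSumset (A : Set M) : ℕ → Set M
  | 0 => {0}
  | k + 1 => A + iteratedSumset A k

theorem iteratedSumset_mono {A B : Set M} (h : A ⊆ B) (k : ℕ) :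
    iteratedSumset A k ⊆ iteratedSumset B k := by
  induction k with
  | zero => rfl
  | succ k ih => exact Set.add_subset_add h ih

theorem map_eq_of_mem_iteratedSumset {N : Type*} [AddCommMonoid N] (φ : M →+ N) {A : Set M}
    {m : N} (hA : ∀ a ∈ A, φ a = m) {k : ℕ} {x : M} (hx : x ∈ iteratedSumset A k) :
    φ x = k • m := by
  induction k generalizing x with
  | zero => rw [hx, map_zero, zero_smul]
  | succ k ih =>
    obtain ⟨a, ha, y, hy, rfl⟩ := hx
    rw [map_add, hA a ha, ih hy, succ_nsmul']

theorem iteratedSumset_union_succ (A B : Set M) (k : ℕ) :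
    iteratedSumset (A ∪ B) (k + 1) = iteratedSumset A (k + 1) ∪ (B + iteratedSumset (A ∪ B) k) := by
  refine subset_antisymm ?_ (Set.union_subset (iteratedSumset_mono Set.subset_union_left _)
    (Set.add_subset_add_right Set.subset_union_right))
  induction k with
  | zero =>
    rintro _ ⟨x, hx | hx, _, rfl, rfl⟩
    · exact Or.inl ⟨x, hx, 0, rfl, rfl⟩
    · exact Or.inr ⟨x, hx, 0, rfl, rfl⟩
  | succ k ih =>
    rintro _ ⟨x, hx | hx, y, hy, rfl⟩
    · rcases ih hy with hy | ⟨b, hb, z, hz, rfl⟩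
      · exact Or.inl ⟨x, hx, y, hy, rfl⟩
      · exact Or.inr ⟨b, hb, x + z, ⟨x, Or.inl hx, z, hz, rfl⟩, add_left_comm b x z⟩
    · exact Or.inr ⟨x, hx, y, hy, rfl⟩

end IteratedSumset

section MonomialIdeal

variable {σ K : Type*}

noncomputable def monomialIdeal (K : Type*) [CommSemiring K] (D : Set (σ →₀ ℕ)) :
    Ideal (MvPolynomial σ K) :=
  Ideal.span ((fun d => monomial d 1) '' D)

theorem X_mul_X_eq_monomial [CommSemiring K] (i j : σ) :
    (X i * X j : MvPolynomial σ K) = monomial (Finsupp.single i 1 + Finsupp.single j 1) 1 := by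
  rw [X, X, monomial_mul, one_mul]

theorem monomial_one_mem_monomialIdeal_iff [CommSemiring K] [Nontrivial K]
    {D : Set (σ →₀ ℕ)} {d : σ →₀ ℕ} :
    monomial d (1 : K) ∈ monomialIdeal K D ↔ ∃ e ∈ D, e ≤ d := by
  classical
  rw [monomialIdeal, mem_ideal_span_monomial_image, support_monomial, if_neg one_ne_zero]
  simp

theorem monomialIdeal_add [CommSemiring K] (A B : Set (σ →₀ ℕ)) :
    monomialIdeal K (A + B) = monomialIdeal K A * monomialIdeal K B := by
  rw [monomialIdeal, monomialIdeal, monomialIdeal, Ideal.span_mul_span', ← Set.image2_mul,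
    Set.image2_image_left, Set.image2_image_right, ← Set.image2_add, Set.image_image2]
  simp only [monomial_mul, one_mul]

theorem monomialIdeal_pow [CommSemiring K] (A : Set (σ →₀ ℕ)) (k : ℕ) :
    monomialIdeal K A ^ k = monomialIdeal K (iteratedSumset A k) := by
  induction k with
  | zero =>
    rw [pow_zero, iteratedSumset, monomialIdeal, Set.image_singleton, monomial_zero', C_1,
      Ideal.span_singleton_one, Ideal.one_eq_top]
  | succ k ih => rw [pow_succ', ih, iteratedSumset, monomialIdeal_add]

theorem minGens_monomialIdeal [Field K] (D : Set (σ →₀ ℕ)) :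
    minGens (monomialIdeal K D) = {d | Minimal (· ∈ D) d} := by
  ext d
  simp only [minGens, Set.mem_ofPred_eq, monomial_one_mem_monomialIdeal_iff, minimal_mem_iff]
  constructor
  · rintro ⟨⟨e, he, hed⟩, hmin⟩
    obtain rfl : e = d := by_contra fun hne => hmin e hed hne ⟨e, he, le_rfl⟩
    exact ⟨he, fun f hf hfe => by_contra fun hne => hmin f hfe (Ne.symm hne) ⟨f, hf, le_rfl⟩⟩
  · rintro ⟨hd, hmin⟩
    refine ⟨⟨d, hd, le_rfl⟩, fun d' hd'd hne ⟨e, he, hed'⟩ => hne ?_⟩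
    exact le_antisymm hd'd (hmin he (hed'.trans hd'd) ▸ hed')

theorem minGens_monomialIdeal_of_degree_eq [Field K] {D : Set (σ →₀ ℕ)} {N : ℕ}
    (hD : ∀ d ∈ D, d.degree = N) : minGens (monomialIdeal K D) = D := by
  rw [minGens_monomialIdeal]
  ext d
  exact (Finsupp.isAntichain_of_degree_eq hD).minimal_mem_iff

end MonomialIdeal

section EdgeIdeal

variable {σ K : Type*} [Field K]

def edgeExponents (G : SimpleGraph σ) : Set (σ →₀ ℕ) :=
  {d | ∃ i j, G.Adj i j ∧ d = Finsupp.single i 1 + Finsupp.single j 1}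

theorem edgeIdeal_eq_monomialIdeal (G : SimpleGraph σ) :
    edgeIdeal G = monomialIdeal K (edgeExponents G) := by
  rw [edgeIdeal, monomialIdeal]
  congr 1
  ext p
  simp [edgeExponents, X_mul_X_eq_monomial, eq_comm]

end EdgeIdeal

section Suspension

variable {V K : Type*} [Field K] (G : SimpleGraph V) (S : Set V)

def baseEdgeExponents : Set (Option V →₀ ℕ) :=
  {d | ∃ i j, G.Adj i j ∧ d = Finsupp.single (some i) 1 + Finsupp.single (some j) 1}

def apexEdgeExponents : Set (Option V →₀ ℕ) :=
  {d | ∃ i, i ∉ S ∧ d = Finsupp.single none 1 + Finsupp.single (some i) 1}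

theorem span_X_some_mul_X_some :
    Ideal.span {p | ∃ i j : V, G.Adj i j ∧ p = X (some i) * X (some j)} =
      monomialIdeal K (baseEdgeExponents G) := by
  rw [monomialIdeal]
  congr 1
  ext p
  simp [baseEdgeExponents, X_mul_X_eq_monomial, eq_comm]

theorem span_X_none_mul_X_some :
    Ideal.span {p | ∃ i : V, i ∉ S ∧ p = X none * X (some i)} =
      monomialIdeal K (apexEdgeExponents S) := by
  rw [monomialIdeal]
  congr 1
  ext p
  simp [apexEdgeExponents, X_mul_X_eq_monomial, eq_comm]

theorem edgeExponents_suspension :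
    edgeExponents (suspension G S) = baseEdgeExponents G ∪ apexEdgeExponents S := by
  ext d
  constructor
  · rintro ⟨a, b, hab, rfl⟩
    rw [suspension, SimpleGraph.fromRel_adj] at hab
    rcases a with _ | i <;> rcases b with _ | j <;> simp at hab
    · exact Or.inr ⟨j, hab, rfl⟩
    · exact Or.inr ⟨i, hab, add_comm _ _⟩
    · rcases hab.2 with h | h
      · exact Or.inl ⟨i, j, h, rfl⟩
      · exact Or.inl ⟨j, i, h, add_comm _ _⟩
  · rintro (⟨i, j, hij, rfl⟩ | ⟨i, hi, rfl⟩)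
    · exact ⟨some i, some j, by simp [suspension, hij, hij.ne], rfl⟩
    · exact ⟨none, some i, by simpa [suspension] using hi, rfl⟩

theorem degree_of_mem_baseEdgeExponents_union :
    ∀ d ∈ baseEdgeExponents G ∪ apexEdgeExponents S, d.degree = 2 := by
  rintro _ (⟨i, j, -, rfl⟩ | ⟨i, -, rfl⟩) <;> simp

theorem apply_none_of_mem_baseEdgeExponents : ∀ d ∈ baseEdgeExponents G, d none = 0 := by
  rintro _ ⟨i, j, -, rfl⟩
  simp

theorem apply_none_of_mem_apexEdgeExponents : ∀ d ∈ apexEdgeExponents S, d none = 1 := by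
  rintro _ ⟨i, -, rfl⟩
  simp

end Suspension

theorem minGens_pow_suspension_split_general {V K : Type*} [Field K]
    (G : SimpleGraph V) (S : Set V) (k : ℕ)
    (hk : 1 ≤ k) :
    -- `IG` is the edge ideal of `G` viewed in the ring of `G^S`, `J = (x₀ xᵢ : xᵢ ∉ S)`
    ∀ IG J : Ideal (MvPolynomial (Option V) K),
      IG = Ideal.span {p | ∃ i j : V, G.Adj i j ∧ p = X (some i) * X (some j)} →
      J = Ideal.span {p | ∃ i : V, i ∉ S ∧ p = X (none : Option V) * X (some i)} →
      minGens ((edgeIdeal (suspension G S) (K := K)) ^ k)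
          = minGens (IG ^ k) ∪ minGens (J * (edgeIdeal (suspension G S) (K := K)) ^ (k - 1))
        ∧ Disjoint (minGens (IG ^ k))
            (minGens (J * (edgeIdeal (suspension G S) (K := K)) ^ (k - 1))) := by
  rintro IG J rfl rfl
  obtain ⟨n, rfl⟩ := Nat.exists_eq_add_of_le' hk
  have hsplit := iteratedSumset_union_succ (baseEdgeExponents G) (apexEdgeExponents S) n
  have hdeg : ∀ d ∈ iteratedSumset (baseEdgeExponents G ∪ apexEdgeExponents S) (n + 1),
      d.degree = (n + 1) • 2 := fun _ =>
    map_eq_of_mem_iteratedSumset Finsupp.degree (degree_of_mem_baseEdgeExponents_union G S)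
  rw [hsplit] at hdeg
  rw [span_X_some_mul_X_some, span_X_none_mul_X_some, edgeIdeal_eq_monomialIdeal,
    edgeExponents_suspension, monomialIdeal_pow, monomialIdeal_pow, monomialIdeal_pow,
    Nat.add_sub_cancel, ← monomialIdeal_add, hsplit, minGens_monomialIdeal_of_degree_eq hdeg,
    minGens_monomialIdeal_of_degree_eq fun d hd => hdeg d (Or.inl hd),
    minGens_monomialIdeal_of_degree_eq fun d hd => hdeg d (Or.inr hd)]
  refine ⟨rfl, Set.disjoint_left.2 fun d hdA ⟨b, hb, e, _, hd⟩ => ?_⟩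
  have h₀ : d none = (n + 1) • 0 := map_eq_of_mem_iteratedSumset (Finsupp.applyAddHom none)
    (apply_none_of_mem_baseEdgeExponents G) hdA
  rw [← hd, Finsupp.add_apply, apply_none_of_mem_apexEdgeExponents S b hb] at h₀
  simp at h₀

theorem minGens_pow_suspension_split {V K : Type*} [Field K]
    (G : SimpleGraph V) (S : Set V) (hS : ∀ x ∈ S, ∀ y ∈ S, ¬ G.Adj x y) (k : ℕ)
    (hk : 1 ≤ k) :
    -- `IG` is the edge ideal of `G` viewed in the ring of `G^S`, `J = (x₀ xᵢ : xᵢ ∉ S)`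
    ∀ IG J : Ideal (MvPolynomial (Option V) K),
      IG = Ideal.span {p | ∃ i j : V, G.Adj i j ∧ p = X (some i) * X (some j)} →
      J = Ideal.span {p | ∃ i : V, i ∉ S ∧ p = X (none : Option V) * X (some i)} →
      minGens ((edgeIdeal (suspension G S) (K := K)) ^ k)
          = minGens (IG ^ k) ∪ minGens (J * (edgeIdeal (suspension G S) (K := K)) ^ (k - 1))
        ∧ Disjoint (minGens (IG ^ k))
            (minGens (J * (edgeIdeal (suspension G S) (K := K)) ^ (k - 1))) :=
  minGens_pow_suspension_split_general G S k hk
end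

section
/- Let G be a finite simple graph and S ⊆ V(G) an independent set, G^S its S-suspension with new vertex x_0, and J = (x_0 x_i : x_i ∉ S). Then for every k ≥ 1, I(G)^k ∩ J·I(G^S)^{k-1} = x_0 · I(G)^k. -/
open MvPolynomial

/-! For `⊇`: every edge of `G` has an endpoint outside the independent set `S`, so
`x₀ · I(G) ⊆ J`, and `I(G) ⊆ I(G^S)`; hence `x₀ · I(G)^k ⊆ J · I(G^S)^(k-1)`.
For `⊆`: `J ⊆ (x₀)`, so an element of the left side is `x₀ g` with `x₀ g ∈ I(G)^k`.
The ideal `I(G)^k` is extended from `K[V]`, and `x₀` is a nonzerodivisor modulo any such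
ideal: under `K[V ∪ {x₀}] ≅ K[V][x₀]` it becomes `I[x₀]`, whose membership is tested
coefficientwise. Hence `g ∈ I(G)^k`. -/

theorem Polynomial.mem_map_C_of_X_mul_mem {R : Type*} [CommSemiring R] {I : Ideal R}
    {p : Polynomial R} (h : Polynomial.X * p ∈ I.map Polynomial.C) : p ∈ I.map Polynomial.C := by
  rw [Ideal.mem_map_C_iff] at h ⊢
  intro n
  simpa using h (n + 1)

namespace MvPolynomial

variable {σ R : Type*} [CommSemiring R]

theorem optionEquivLeft_comp_rename_some :
    (optionEquivLeft R σ : MvPolynomial (Option σ) R →+* Polynomial (MvPolynomial σ R)).comp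
      (rename some : MvPolynomial σ R →ₐ[R] MvPolynomial (Option σ) R) = Polynomial.C := by
  ext <;> simp [optionEquivLeft_X_some, optionEquivLeft_C]

theorem map_rename_some_eq_comap_map_C (I : Ideal (MvPolynomial σ R)) :
    I.map (rename some) = (I.map Polynomial.C).comap (optionEquivLeft R σ) := by
  rw [← optionEquivLeft_comp_rename_some, ← Ideal.map_map]
  exact (Ideal.comap_map_of_bijective _ (optionEquivLeft R σ).bijective).symm

theorem mem_map_rename_some_of_X_none_mul_mem {I : Ideal (MvPolynomial σ R)}
    {g : MvPolynomial (Option σ) R} (h : X none * g ∈ I.map (rename some)) :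
    g ∈ I.map (rename some) := by
  rw [map_rename_some_eq_comap_map_C, Ideal.mem_comap] at h ⊢
  rw [map_mul, optionEquivLeft_X_none] at h
  exact Polynomial.mem_map_C_of_X_mul_mem h

theorem map_rename_some_inf_span_X_none (I : Ideal (MvPolynomial σ R)) :
    I.map (rename some) ⊓ Ideal.span {X none} = Ideal.span {X none} * I.map (rename some) := by
  refine le_antisymm ?_ (Ideal.mul_le_inf.trans_eq (inf_comm _ _))
  rintro f ⟨hf, hX⟩
  obtain ⟨g, rfl⟩ := Ideal.mem_span_singleton.1 hX
  exact Ideal.mul_mem_mul (Ideal.mem_span_singleton_self _)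
    (mem_map_rename_some_of_X_none_mul_mem hf)

end MvPolynomial

section Suspension

variable {V K : Type*} [Field K] (G : SimpleGraph V) (S : Set V)

theorem map_rename_some_edgeIdeal :
    (edgeIdeal (K := K) G).map (rename some) =
      Ideal.span {p | ∃ i j : V, G.Adj i j ∧ p = X (some i) * X (some j)} := by
  rw [edgeIdeal, Ideal.map_span]
  congr 1
  ext p
  constructor
  · rintro ⟨q, ⟨i, j, hij, rfl⟩, rfl⟩
    exact ⟨i, j, hij, by simp⟩
  · rintro ⟨i, j, hij, rfl⟩
    exact ⟨X i * X j, ⟨i, j, hij, rfl⟩, by simp⟩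

theorem map_rename_some_edgeIdeal_le_suspension :
    (edgeIdeal (K := K) G).map (rename some) ≤ edgeIdeal (suspension G S) := by
  rw [map_rename_some_edgeIdeal, edgeIdeal]
  refine Ideal.span_mono ?_
  rintro p ⟨i, j, hij, rfl⟩
  exact ⟨some i, some j, by simpa [suspension] using ⟨hij.ne, Or.inl hij⟩, rfl⟩

theorem span_apex_edges_le_span_X_none :
    Ideal.span {p | ∃ i : V, i ∉ S ∧ p = X (none : Option V) * X (some i)} ≤
      Ideal.span {(X none : MvPolynomial (Option V) K)} := by
  rw [Ideal.span_le]
  rintro p ⟨i, -, rfl⟩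
  exact Ideal.mem_span_singleton.2 (dvd_mul_right _ _)

theorem span_X_none_mul_map_edgeIdeal_le (hS : ∀ x ∈ S, ∀ y ∈ S, ¬ G.Adj x y) :
    Ideal.span {X none} * (edgeIdeal (K := K) G).map (rename some) ≤
      Ideal.span {p | ∃ i : V, i ∉ S ∧ p = X (none : Option V) * X (some i)} := by
  rw [map_rename_some_edgeIdeal, Ideal.span_mul_span', Ideal.span_le]
  rintro _ ⟨_, rfl, _, ⟨i, j, hij, rfl⟩, rfl⟩
  change X none * (X (some i) * X (some j)) ∈ Ideal.span _
  by_cases hi : i ∈ S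
  · have hj : j ∉ S := fun hj => hS i hi j hj hij
    rw [mul_left_comm]
    exact Ideal.mul_mem_left _ _ (Ideal.subset_span ⟨j, hj, rfl⟩)
  · rw [← mul_assoc]
    exact Ideal.mul_mem_right _ _ (Ideal.subset_span ⟨i, hi, rfl⟩)

end Suspension

theorem inf_pow_suspension_eq {V K : Type*} [Field K]
    (G : SimpleGraph V) (S : Set V) (hS : ∀ x ∈ S, ∀ y ∈ S, ¬ G.Adj x y) (k : ℕ)
    (hk : 1 ≤ k) :
    -- `IG` is the edge ideal of `G` viewed in the ring of `G^S`, `J = (x₀ xᵢ : xᵢ ∉ S)`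
    ∀ IG J : Ideal (MvPolynomial (Option V) K),
      IG = Ideal.span {p | ∃ i j : V, G.Adj i j ∧ p = X (some i) * X (some j)} →
      J = Ideal.span {p | ∃ i : V, i ∉ S ∧ p = X (none : Option V) * X (some i)} →
      IG ^ k ⊓ (J * (edgeIdeal (suspension G S) (K := K)) ^ (k - 1))
        = Ideal.span {(X (none : Option V) : MvPolynomial (Option V) K)} * IG ^ k := by
  rintro IG J hIG rfl
  rw [← map_rename_some_edgeIdeal] at hIG
  subst hIG
  obtain ⟨k, rfl⟩ := Nat.exists_eq_add_of_le' hk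
  rw [Nat.add_sub_cancel]
  refine le_antisymm ?_ (le_inf Ideal.mul_le_right ?_)
  · calc _ ≤ ((edgeIdeal G).map (rename some)) ^ (k + 1) ⊓ Ideal.span {X none} :=
          inf_le_inf_left _ (Ideal.mul_le_left.trans (span_apex_edges_le_span_X_none S))
      _ = _ := by rw [← Ideal.map_pow, map_rename_some_inf_span_X_none]
  · rw [pow_succ', ← mul_assoc]
    exact Ideal.mul_mono (span_X_none_mul_map_edgeIdeal_le G S hS)
      (Ideal.pow_right_mono (map_rename_some_edgeIdeal_le_suspension G S) k)
end

section
/- Let G be a finite simple graph and S ⊆ V(G) an independent set. If G is gap-free, then the S-suspension G^S is gap-free. -/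
open SimpleGraph

/-- Two disjoint edges `e₁, e₂` of `G` form a gap if no edge of `G` meets both of them;
`G` is gap-free if it has no gap. -/
def IsGapFree {V : Type*} (G : SimpleGraph V) : Prop :=
  ¬ ∃ e₁ ∈ G.edgeSet, ∃ e₂ ∈ G.edgeSet,
    (∀ v : V, ¬ (v ∈ e₁ ∧ v ∈ e₂)) ∧
    (∀ e ∈ G.edgeSet, ¬ ((∃ v, v ∈ e ∧ v ∈ e₁) ∧ (∃ v, v ∈ e ∧ v ∈ e₂)))

lemma susp_adj_some_some {V : Type*} {G : SimpleGraph V} {S : Set V} {x y : V} :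
    (suspension G S).Adj (some x) (some y) ↔ G.Adj x y := by
  constructor
  · rintro ⟨hne, h | h⟩
    · exact h
    · exact h.symm
  · intro h
    exact ⟨by simpa using h.ne, Or.inl h⟩

lemma susp_adj_some_none {V : Type*} {G : SimpleGraph V} {S : Set V} {x : V} :
    (suspension G S).Adj (some x) none ↔ x ∉ S := by
  constructor
  · rintro ⟨hne, h | h⟩
    · exact h
    · exact h.elim
  · intro h
    exact ⟨by simp, Or.inl h⟩

lemma susp_not_adj_none_none {V : Type*} {G : SimpleGraph V} {S : Set V} :
    ¬ (suspension G S).Adj none none := by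
  rintro ⟨hne, _⟩
  exact hne rfl

/-- Every edge of the suspension is either a `G`-edge or an edge to the apex. -/
lemma susp_edge_cases {V : Type*} {G : SimpleGraph V} {S : Set V}
    {e : Sym2 (Option V)} (he : e ∈ (suspension G S).edgeSet) :
    (∃ x y, e = s(some x, some y) ∧ G.Adj x y) ∨
    (∃ x, e = s(some x, none) ∧ x ∉ S) := by
  induction e using Sym2.ind with
  | _ a b =>
    rw [SimpleGraph.mem_edgeSet] at he
    match a, b with
    | some x, some y => exact Or.inl ⟨x, y, rfl, susp_adj_some_some.mp he⟩
    | some x, none => exact Or.inr ⟨x, rfl, susp_adj_some_none.mp he⟩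
    | none, some x =>
      refine Or.inr ⟨x, Sym2.eq_swap, susp_adj_some_none.mp he.symm⟩
    | none, none => exact absurd he susp_not_adj_none_none

theorem isGapFree_suspension {V : Type*} [Fintype V]
    (G : SimpleGraph V) (S : Set V) (hS : ∀ x ∈ S, ∀ y ∈ S, ¬ G.Adj x y)
    (hG : IsGapFree G) : IsGapFree (suspension G S) := by
  rintro ⟨e₁, he₁, e₂, he₂, hdisj, hmeet⟩
  rcases susp_edge_cases he₁ with ⟨x, y, rfl, hxy⟩ | ⟨x, rfl, hxS⟩
  · rcases susp_edge_cases he₂ with ⟨z, w, rfl, hzw⟩ | ⟨z, rfl, hzS⟩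
    · -- both are G-edges: contradict gap-freeness of G
      apply hG
      refine ⟨s(x, y), hxy, s(z, w), hzw, ?_, ?_⟩
      · intro v ⟨hv1, hv2⟩
        exact hdisj (some v) (by simpa using And.intro hv1 hv2)
      · intro e he ⟨⟨u, hu1, hu2⟩, ⟨u', hu'1, hu'2⟩⟩
        induction e using Sym2.ind with
        | _ a b =>
          rw [SimpleGraph.mem_edgeSet] at he
          refine hmeet s(some a, some b) ((susp_adj_some_some (S := S)).mpr he) ⟨⟨some u, ?_, ?_⟩, ⟨some u', ?_, ?_⟩⟩
          · simp only [Sym2.mem_iff] at hu1 ⊢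
            rcases hu1 with rfl | rfl <;> simp
          · simp only [Sym2.mem_iff] at hu2 ⊢
            rcases hu2 with rfl | rfl <;> simp
          · simp only [Sym2.mem_iff] at hu'1 ⊢
            rcases hu'1 with rfl | rfl <;> simp
          · simp only [Sym2.mem_iff] at hu'2 ⊢
            rcases hu'2 with rfl | rfl <;> simp
    · -- e₁ a G-edge, e₂ meets the apex
      by_cases hx : x ∈ S
      · by_cases hy : y ∈ S
        · exact hS x hx y hy hxy
        · exact hmeet s(some y, none) ((susp_adj_some_none (G := G)).mpr hy)
            ⟨⟨some y, by simp, by simp⟩, ⟨none, by simp, by simp⟩⟩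
      · exact hmeet s(some x, none) ((susp_adj_some_none (G := G)).mpr hx)
          ⟨⟨some x, by simp, by simp⟩, ⟨none, by simp, by simp⟩⟩
  · rcases susp_edge_cases he₂ with ⟨z, w, rfl, hzw⟩ | ⟨z, rfl, hzS⟩
    · -- e₂ a G-edge, e₁ meets the apex
      by_cases hz : z ∈ S
      · by_cases hw : w ∈ S
        · exact hS z hz w hw hzw
        · exact hmeet s(some w, none) ((susp_adj_some_none (G := G)).mpr hw)
            ⟨⟨none, by simp, by simp⟩, ⟨some w, by simp, by simp⟩⟩
      · exact hmeet s(some z, none) ((susp_adj_some_none (G := G)).mpr hz)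
          ⟨⟨none, by simp, by simp⟩, ⟨some z, by simp, by simp⟩⟩
    · -- both edges contain the apex: not disjoint
      exact hdisj none ⟨by simp, by simp⟩
end
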